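/- Let 0 < δ ≤ 1/2 and let Σ, Σ̂ be d×d positive semidefinite matrices whose positive semidefinite square roots satisfy ‖Σ^{1/2} − I‖_F ≤ δ and ‖Σ̂^{1/2} − I‖_F ≤ δ, and let M be a d×d matrix with ‖M‖_F = 1. Then the trace norm (Schatten-1 norm, i.e., the sum of singular values) satisfies ‖Σ^{1/2}MΣ^{1/2} − Σ̂^{1/2}MΣ̂^{1/2}‖_{S¹} ≤ 5δ. -/

import Mathlib

open MeasureTheory ProbabilityTheory
open scoped Classical

/-- The Gaussian measure `N(μ, I)` on `ℝ^d`, i.e. the product of `d` one-dimensional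
Gaussians of variance `1` centered at the coordinates of `μ`. -/
noncomputable def gaussId (d : ℕ) (μ : EuclideanSpace ℝ (Fin d)) :
    Measure (EuclideanSpace ℝ (Fin d)) :=
  (Measure.pi fun i => gaussianReal (μ i) 1).map
    (MeasurableEquiv.toLp 2 (Fin d → ℝ))

/-- Square root of a positive semidefinite matrix, as defined in the older Mathlib
(`Matrix.PosSemidef.sqrt`, since removed). -/
noncomputable def Matrix.PosSemidef.sqrt {n : Type*} [Fintype n] [DecidableEq n] {𝕜 : Type*}
    [RCLike 𝕜] [PartialOrder 𝕜] {A : Matrix n n 𝕜} (hA : A.PosSemidef) : Matrix n n 𝕜 :=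
  hA.1.eigenvectorUnitary.1 * Matrix.diagonal ((↑) ∘ (Real.sqrt ·) ∘ hA.1.eigenvalues) *
  (star hA.1.eigenvectorUnitary : Matrix n n 𝕜)

/-- The mean-zero Gaussian measure `N(0, Σ)` on `ℝ^d` with covariance matrix `Σ`:
the pushforward of the standard Gaussian under `x ↦ Σ^{1/2} x`. -/
noncomputable def gaussCov (d : ℕ) {S : Matrix (Fin d) (Fin d) ℝ} (hS : S.PosSemidef) :
    Measure (EuclideanSpace ℝ (Fin d)) :=
  (gaussId d 0).map (fun x =>
    (EuclideanSpace.equiv (Fin d) ℝ).symm (hS.sqrt.mulVec (EuclideanSpace.equiv (Fin d) ℝ x)))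

/-- Total variation distance between two measures:
`sup` over measurable sets `A` of `|P(A) − Q(A)|`. -/
noncomputable def tvDist {Ω : Type*} [MeasurableSpace Ω] (P Q : Measure Ω) : ℝ :=
  ⨆ A : {s : Set Ω // MeasurableSet s}, |(P A).toReal - (Q A).toReal|

/-- The cumulative distribution function of the standard one-dimensional Gaussian. -/
noncomputable def stdPhi (x : ℝ) : ℝ := (gaussianReal 0 1 (Set.Iic x)).toReal

/-- Frobenius norm of a matrix. -/
noncomputable def frob {d : ℕ} (A : Matrix (Fin d) (Fin d) ℝ) : ℝ :=
  Real.sqrt (∑ i, ∑ j, (A i j) ^ 2)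

/-- The empirical mean of a finite set of points. -/
noncomputable def empMean {d : ℕ} (G : Finset (EuclideanSpace ℝ (Fin d))) :
    EuclideanSpace ℝ (Fin d) :=
  (G.card : ℝ)⁻¹ • ∑ x ∈ G, x

/-- The expectation of `f` under the uniform distribution over the finite set `G`. -/
noncomputable def empExp {α : Type*} (G : Finset α) (f : α → ℝ) : ℝ :=
  (∑ x ∈ G, f x) / G.card

/-- The probability of the event `p` under the uniform distribution over `G`. -/
noncomputable def empProb {α : Type*} (G : Finset α) (p : α → Prop) : ℝ :=
  ((G.filter p).card : ℝ) / G.card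

/-- `φ(S', G) = |G ∖ G'| / |S'|` where `G' = S' ∩ G`. -/
noncomputable def phiF {α : Type*} (S' G : Finset α) : ℝ := ((G \ S').card : ℝ) / S'.card

/-- `ψ(S', G) = |E'| / |S'|` where `E' = S' ∩ E`. -/
noncomputable def psiF {α : Type*} (S' E : Finset α) : ℝ := ((S' ∩ E).card : ℝ) / S'.card

/-- `Δ(S', G) = ψ(S', G) + φ(S', G) log(1/φ(S', G))`. -/
noncomputable def deltaF {α : Type*} (S' G E : Finset α) : ℝ :=
  psiF S' E + phiF S' G * Real.log (1 / phiF S' G)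

/-- The even degree-2 polynomial `x ↦ xᵀ A x + c`. -/
noncomputable def quadPoly {d : ℕ} (A : Matrix (Fin d) (Fin d) ℝ) (c : ℝ)
    (x : EuclideanSpace ℝ (Fin d)) : ℝ :=
  (∑ i, ∑ j, A i j * x i * x j) + c

/-- The general even polynomial of degree at most 4,
`x ↦ ∑ T i j k l * xᵢxⱼxₖxₗ + xᵀ A x + c`. -/
noncomputable def quartPoly {d : ℕ} (T : Fin d → Fin d → Fin d → Fin d → ℝ)
    (A : Matrix (Fin d) (Fin d) ℝ) (c : ℝ) (x : EuclideanSpace ℝ (Fin d)) : ℝ :=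
  (∑ i, ∑ j, ∑ k, ∑ l, T i j k l * x i * x j * x k * x l)
    + (∑ i, ∑ j, A i j * x i * x j) + c

/-- `(η, δ)`-goodness of a finite set `G` with respect to `N(μ, I)`, with universal
constant `C₀` in the boundedness condition. -/
structure IsGood (d : ℕ) (η δ C₀ : ℝ) (μ : EuclideanSpace ℝ (Fin d))
    (G : Finset (EuclideanSpace ℝ (Fin d))) : Prop where
  bounded : ∀ x ∈ G, ‖x - μ‖ ^ 2 ≤ C₀ * d * Real.log (G.card / δ)
  affine : ∀ (w : EuclideanSpace ℝ (Fin d)) (b : ℝ),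
    |empProb G (fun x => 0 ≤ (∑ i, w i * x i) + b)
      - ((gaussId d μ) {x | 0 ≤ (∑ i, w i * x i) + b}).toReal|
      ≤ η / (d * Real.log (d / (η * δ)))
  meanClose : ‖empMean G - μ‖ ≤ η
  covClose : ∀ v : EuclideanSpace ℝ (Fin d), ‖v‖ = 1 →
    |empExp G (fun x => (∑ i, v i * (x i - empMean G i)) ^ 2) - 1| ≤ η / d
  polyMean : ∀ (A : Matrix (Fin d) (Fin d) ℝ) (c : ℝ),
    |empExp G (quadPoly A c) - ∫ x, quadPoly A c x ∂(gaussId d μ)|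
      ≤ η * Real.sqrt (∫ x, (quadPoly A c x) ^ 2 ∂(gaussId d μ))
  polySq : ∀ (A : Matrix (Fin d) (Fin d) ℝ) (c : ℝ),
    |empExp G (fun x => (quadPoly A c x) ^ 2) - ∫ x, (quadPoly A c x) ^ 2 ∂(gaussId d μ)|
      ≤ η * ∫ x, (quadPoly A c x) ^ 2 ∂(gaussId d μ)
  polyTail : ∀ (A : Matrix (Fin d) (Fin d) ℝ) (c : ℝ),
    empProb G (fun x => 0 ≤ quadPoly A c x)
      ≤ ((gaussId d μ) {x | 0 ≤ quadPoly A c x}).toReal + η / (d * Real.log (G.card / δ))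

/-- `(η, δ)`-goodness of a finite set `G` with respect to `N(0, Σ)`, with universal
constant `C₀` in the boundedness condition. -/
structure IsGoodCov (d : ℕ) (η δ C₀ : ℝ) {S : Matrix (Fin d) (Fin d) ℝ} (hS : S.PosSemidef)
    (G : Finset (EuclideanSpace ℝ (Fin d))) : Prop where
  bounded : ∀ x ∈ G, (∑ i, ∑ j, x i * S⁻¹ i j * x j) ≤ C₀ * d * Real.log (G.card / δ)
  deg2Mean : ∀ (A : Matrix (Fin d) (Fin d) ℝ) (c : ℝ),
    |empExp G (quadPoly A c) - ∫ x, quadPoly A c x ∂(gaussCov d hS)|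
      ≤ η * Real.sqrt (∫ x, (quadPoly A c x) ^ 2 ∂(gaussCov d hS))
  deg2Sq : ∀ (A : Matrix (Fin d) (Fin d) ℝ) (c : ℝ),
    |empExp G (fun x => (quadPoly A c x) ^ 2) - ∫ x, (quadPoly A c x) ^ 2 ∂(gaussCov d hS)|
      ≤ η * ∫ x, (quadPoly A c x) ^ 2 ∂(gaussCov d hS)
  deg2Tail : ∀ (A : Matrix (Fin d) (Fin d) ℝ) (c : ℝ),
    empProb G (fun x => 0 ≤ quadPoly A c x)
      ≤ ((gaussCov d hS) {x | 0 ≤ quadPoly A c x}).toReal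
        + η ^ 2 / (d * Real.log (G.card / δ))
  deg4Mean : ∀ (T : Fin d → Fin d → Fin d → Fin d → ℝ) (A : Matrix (Fin d) (Fin d) ℝ) (c : ℝ),
    |empExp G (quartPoly T A c) - ∫ x, quartPoly T A c x ∂(gaussCov d hS)|
      ≤ η * Real.sqrt (∫ x, (quartPoly T A c x
          - ∫ y, quartPoly T A c y ∂(gaussCov d hS)) ^ 2 ∂(gaussCov d hS))
  deg4Tail : ∀ (T : Fin d → Fin d → Fin d → Fin d → ℝ) (A : Matrix (Fin d) (Fin d) ℝ) (c : ℝ),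
    empProb G (fun x => 0 ≤ quartPoly T A c x)
      ≤ ((gaussCov d hS) {x | 0 ≤ quartPoly T A c x}).toReal
        + η ^ 2 / (2 * Real.log (1 / η) * (d * Real.log (G.card / δ)) ^ 2)

/-- The trace norm (Schatten-1 norm) of a matrix: the trace of `(AᵀA)^{1/2}`. -/
noncomputable def traceNorm {d : ℕ} (A : Matrix (Fin d) (Fin d) ℝ) : ℝ :=
  ((Matrix.posSemidef_conjTranspose_mul_self A).sqrt).trace

open Matrix

section TN
variable {d : ℕ}

noncomputable def toE (v : Fin d → ℝ) : EuclideanSpace ℝ (Fin d) := WithLp.toLp 2 v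

lemma innerE (x y : Fin d → ℝ) : (inner ℝ (toE x) (toE y) : ℝ) = x ⬝ᵥ y := by
  simp [toE, PiLp.inner_apply, RCLike.inner_apply, dotProduct, conj_trivial]
  exact Finset.sum_congr rfl fun _ _ => mul_comm _ _

lemma dot_self_nonneg (x : Fin d → ℝ) : 0 ≤ x ⬝ᵥ x :=
  Finset.sum_nonneg fun _ _ => mul_self_nonneg _

lemma normE (x : Fin d → ℝ) : ‖toE x‖ = Real.sqrt (x ⬝ᵥ x) := by
  rw [@norm_eq_sqrt_real_inner, innerE]

lemma hCS (w v : Fin d → ℝ) : w ⬝ᵥ v ≤ Real.sqrt (w ⬝ᵥ w) * Real.sqrt (v ⬝ᵥ v) := by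
  have := real_inner_le_norm (toE w) (toE v)
  rwa [innerE, normE, normE] at this

lemma hdotT (Z : Matrix (Fin d) (Fin d) ℝ) (w v : Fin d → ℝ) :
    w ⬝ᵥ (Z *ᵥ v) = (Zᵀ *ᵥ w) ⬝ᵥ v := by
  rw [Matrix.dotProduct_mulVec, Matrix.mulVec_transpose]

lemma frob_nonneg (A : Matrix (Fin d) (Fin d) ℝ) : 0 ≤ frob A := Real.sqrt_nonneg _

lemma dot_sum (u : Fin d → ℝ) {ι : Type*} [Fintype ι] (v : ι → (Fin d → ℝ)) :
    u ⬝ᵥ (∑ k, v k) = ∑ k, u ⬝ᵥ v k := by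
  simp only [dotProduct, Finset.sum_apply, Finset.mul_sum]
  exact Finset.sum_comm

lemma frob_sq (A : Matrix (Fin d) (Fin d) ℝ) :
    frob A ^ 2 = ∑ i, ∑ j, (A i j) ^ 2 :=
  Real.sq_sqrt (Finset.sum_nonneg fun _ _ => Finset.sum_nonneg fun _ _ => sq_nonneg _)

lemma frob_eq_trace (A : Matrix (Fin d) (Fin d) ℝ) :
    frob A ^ 2 = Matrix.trace (Aᴴ * A) := by
  rw [frob_sq]
  simp only [Matrix.trace, Matrix.diag, Matrix.mul_apply, Matrix.conjTranspose_apply,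
    star_trivial, ← sq]
  exact Finset.sum_comm

end TN

open Matrix in
theorem traceNorm_sum_mul_le {d : ℕ} {ι : Type*} [Fintype ι]
    (X Y : ι → Matrix (Fin d) (Fin d) ℝ) :
    traceNorm (∑ k, X k * Y k) ≤ ∑ k, frob (X k) * frob (Y k) := by
  classical
  set A : Matrix (Fin d) (Fin d) ℝ := ∑ k, X k * Y k with hAdef
  have hH := Matrix.posSemidef_conjTranspose_mul_self A
  set lam : Fin d → ℝ := hH.1.eigenvalues with hlamdef
  set V : Matrix (Fin d) (Fin d) ℝ := (hH.1.eigenvectorUnitary : Matrix (Fin d) (Fin d) ℝ) with hVdef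
  have hV2 : V * Vᴴ = 1 := by
    have := Matrix.mem_unitaryGroup_iff.mp hH.1.eigenvectorUnitary.2
    simpa [Matrix.star_eq_conjTranspose, hVdef] using this
  have hV1 : Vᴴ * V = 1 := by
    have := Matrix.mem_unitaryGroup_iff'.mp hH.1.eigenvectorUnitary.2
    simpa [Matrix.star_eq_conjTranspose, hVdef] using this
  have hlam0 : ∀ i, 0 ≤ lam i := hH.eigenvalues_nonneg
  -- step A : trace norm = sum of sqrt eigenvalues
  have hsqrt : (Matrix.posSemidef_conjTranspose_mul_self A).sqrt
      = V * Matrix.diagonal (fun i => Real.sqrt (lam i)) * Vᴴ := by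
    show hH.sqrt = _
    rw [Matrix.PosSemidef.sqrt]
    rw [RCLike.ofReal_real_eq_id]
    simp [Matrix.star_eq_conjTranspose, Function.comp_def]
    rfl
  have htr : traceNorm A = ∑ i, Real.sqrt (lam i) := by
    rw [traceNorm, hsqrt, Matrix.trace_mul_cycle, hV1, Matrix.one_mul,
      Matrix.trace_diagonal]
  -- step B : columns of A*V are orthogonal with norms sqrt(lam)
  set B : Matrix (Fin d) (Fin d) ℝ := A * V with hBdef
  have hBtB : Bᴴ * B = Matrix.diagonal lam := by
    have hsp := hH.1.spectral_theorem
    rw [RCLike.ofReal_real_eq_id] at hsp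
    calc Bᴴ * B = Vᴴ * (Aᴴ * A) * V := by
          rw [hBdef, Matrix.conjTranspose_mul]
          simp only [Matrix.mul_assoc]
      _ = Vᴴ * V * Matrix.diagonal lam * (Vᴴ * V) := by
          rw [hsp]
          simp only [Unitary.conjStarAlgAut_apply, Matrix.star_eq_conjTranspose, Matrix.mul_assoc, Function.id_comp, hVdef]
          rfl
      _ = Matrix.diagonal lam := by rw [hV1]; simp
  set b : Fin d → (Fin d → ℝ) := fun i r => B r i with hbdef
  have hbb : ∀ i j, b i ⬝ᵥ b j = Matrix.diagonal lam i j := by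
    intro i j
    have := congrFun (congrFun hBtB i) j
    simpa [Matrix.mul_apply, Matrix.conjTranspose_apply, dotProduct, hbdef] using this
  set S : Finset (Fin d) := Finset.univ.filter (fun i => lam i ≠ 0) with hSdef
  set uu : Fin d → (Fin d → ℝ) := fun i => (Real.sqrt (lam i))⁻¹ • b i with huudef
  -- orthonormal family
  have hortho : Orthonormal ℝ (fun i : {i // lam i ≠ 0} => toE (uu i.1)) := by
    rw [orthonormal_iff_ite]
    intro i j
    have hinner : (inner ℝ (toE (uu i.1)) (toE (uu j.1)) : ℝ)
        = (Real.sqrt (lam i.1))⁻¹ * ((Real.sqrt (lam j.1))⁻¹ * (b i.1 ⬝ᵥ b j.1)) := by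
      rw [innerE, huudef]
      simp only [smul_dotProduct, dotProduct_smul, smul_eq_mul]
      ring
    rw [hinner, hbb]
    by_cases h : i = j
    · subst h
      simp only [Matrix.diagonal_apply_eq, if_pos rfl]
      have hpos : 0 < Real.sqrt (lam i.1) :=
        Real.sqrt_pos.2 (lt_of_le_of_ne (hlam0 i.1) (Ne.symm i.2))
      field_simp
      simp [Real.sq_sqrt (hlam0 i.1)]
    · have hne : i.1 ≠ j.1 := fun hh => h (Subtype.ext hh)
      rw [Matrix.diagonal_apply_ne _ hne, if_neg h]
      ring
  -- Bessel
  have hbessel : ∀ x : Fin d → ℝ, (∑ i ∈ S, (uu i ⬝ᵥ x) ^ 2) ≤ x ⬝ᵥ x := by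
    intro x
    have h1 := hortho.sum_inner_products_le (x := toE x) (s := (Finset.univ : Finset {i // lam i ≠ 0}))
    have h2 : (∑ i ∈ S, (uu i ⬝ᵥ x) ^ 2)
        = ∑ i : {i // lam i ≠ 0}, ‖(inner ℝ (toE (uu i.1)) (toE x) : ℝ)‖ ^ 2 := by
      rw [Finset.sum_subtype (p := fun i => lam i ≠ 0) S (by simp [hSdef]) (fun i => (uu i ⬝ᵥ x) ^ 2)]
      congr 1
      funext i
      rw [innerE, Real.norm_eq_abs, sq_abs]
    have h3 : ‖toE x‖ ^ 2 = x ⬝ᵥ x := by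
      rw [normE, Real.sq_sqrt (dot_self_nonneg x)]
    rw [h2, ← h3]
    exact h1
  -- column decomposition of b
  set c : ι → Fin d → (Fin d → ℝ) := fun k i r => (Y k * V) r i with hcdef
  have hbcol : ∀ i, b i = ∑ k, (X k) *ᵥ (c k i) := by
    intro i
    funext r
    show B r i = _
    rw [hBdef, hAdef, Matrix.sum_mul, Matrix.sum_apply, Finset.sum_apply]
    refine Finset.sum_congr rfl fun k _ => ?_
    rw [Matrix.mul_assoc, Matrix.mul_apply]
    simp [Matrix.mulVec, dotProduct, hcdef]
  set g : ι → Fin d → ℝ := fun k i => ((X k)ᵀ *ᵥ uu i) ⬝ᵥ ((X k)ᵀ *ᵥ uu i) with hgdef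
  set h : ι → Fin d → ℝ := fun k i => c k i ⬝ᵥ c k i with hhdef
  have hg0 : ∀ k i, 0 ≤ g k i := fun k i => dot_self_nonneg _
  have hh0 : ∀ k i, 0 ≤ h k i := fun k i => dot_self_nonneg _
  have hsqrt_le : ∀ i ∈ S, Real.sqrt (lam i) ≤ ∑ k, Real.sqrt (g k i) * Real.sqrt (h k i) := by
    intro i hi
    have hne : lam i ≠ 0 := by simpa [hSdef] using hi
    have heq : Real.sqrt (lam i) = uu i ⬝ᵥ b i := by
      have hd : uu i ⬝ᵥ b i = (Real.sqrt (lam i))⁻¹ * lam i := by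
        rw [huudef]
        simp only [smul_dotProduct, smul_eq_mul]
        rw [hbb i i, Matrix.diagonal_apply_eq]
      have hpos : 0 < Real.sqrt (lam i) :=
        Real.sqrt_pos.2 (lt_of_le_of_ne (hlam0 i) (Ne.symm hne))
      rw [hd]
      rw [← Real.mul_self_sqrt (hlam0 i)]
      field_simp
      rw [Real.sqrt_sq hpos.le]
    rw [heq, hbcol i, dot_sum]
    refine Finset.sum_le_sum fun k _ => ?_
    rw [hdotT]
    exact hCS _ _
  have hgsum : ∀ k, ∑ i ∈ S, g k i ≤ frob (X k) ^ 2 := by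
    intro k
    have hexp : ∀ i, g k i = ∑ j, (uu i ⬝ᵥ (fun r => X k r j)) ^ 2 := by
      intro i
      simp only [hgdef, dotProduct, Matrix.mulVec, Matrix.transpose_apply]
      refine Finset.sum_congr rfl fun j _ => ?_
      rw [sq]
      congr 1 <;> exact Finset.sum_congr rfl fun r _ => mul_comm _ _
    calc ∑ i ∈ S, g k i = ∑ j, ∑ i ∈ S, (uu i ⬝ᵥ (fun r => X k r j)) ^ 2 := by
          simp_rw [hexp]; exact Finset.sum_comm
      _ ≤ ∑ j, (fun r => X k r j) ⬝ᵥ (fun r => X k r j) :=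
          Finset.sum_le_sum fun j _ => hbessel _
      _ = frob (X k) ^ 2 := by
          rw [frob_sq]
          simp only [dotProduct, ← sq]
          exact Finset.sum_comm
  have hhsum : ∀ k, ∑ i ∈ S, h k i ≤ frob (Y k) ^ 2 := by
    intro k
    have h1 : ∑ i ∈ S, h k i ≤ ∑ i, h k i :=
      Finset.sum_le_sum_of_subset_of_nonneg (Finset.filter_subset _ _) fun i _ _ => hh0 k i
    have h2 : ∑ i, h k i = frob (Y k * V) ^ 2 := by
      rw [frob_sq]
      simp only [hhdef, hcdef, dotProduct, ← sq]
      exact Finset.sum_comm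
    have h3 : frob (Y k * V) ^ 2 = frob (Y k) ^ 2 := by
      rw [frob_eq_trace, frob_eq_trace, Matrix.conjTranspose_mul]
      have h4 : (Y k * V) * (Vᴴ * (Y k)ᴴ) = Y k * (Y k)ᴴ := by
        rw [Matrix.mul_assoc, ← Matrix.mul_assoc V, hV2, Matrix.one_mul]
      rw [Matrix.trace_mul_comm, h4, Matrix.trace_mul_comm]
    linarith
  have hCSsum : ∀ k, ∑ i ∈ S, Real.sqrt (g k i) * Real.sqrt (h k i)
      ≤ frob (X k) * frob (Y k) := by
    intro k
    have h0 : (0:ℝ) ≤ ∑ i ∈ S, Real.sqrt (g k i) * Real.sqrt (h k i) :=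
      Finset.sum_nonneg fun i _ => mul_nonneg (Real.sqrt_nonneg _) (Real.sqrt_nonneg _)
    have h1 : (∑ i ∈ S, Real.sqrt (g k i) * Real.sqrt (h k i)) ^ 2
        ≤ (∑ i ∈ S, g k i) * ∑ i ∈ S, h k i := by
      refine le_trans (Finset.sum_mul_sq_le_sq_mul_sq S _ _) (le_of_eq ?_)
      congr 1
      · exact Finset.sum_congr rfl fun i _ => Real.sq_sqrt (hg0 k i)
      · exact Finset.sum_congr rfl fun i _ => Real.sq_sqrt (hh0 k i)
    calc ∑ i ∈ S, Real.sqrt (g k i) * Real.sqrt (h k i)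
        = Real.sqrt ((∑ i ∈ S, Real.sqrt (g k i) * Real.sqrt (h k i)) ^ 2) :=
          (Real.sqrt_sq h0).symm
      _ ≤ Real.sqrt ((frob (X k) ^ 2) * (frob (Y k) ^ 2)) := by
          refine Real.sqrt_le_sqrt (le_trans h1 ?_)
          exact mul_le_mul (hgsum k) (hhsum k)
            (Finset.sum_nonneg fun i _ => hh0 k i) (sq_nonneg _)
      _ = frob (X k) * frob (Y k) := by
          rw [Real.sqrt_mul (sq_nonneg _), Real.sqrt_sq (frob_nonneg _),
            Real.sqrt_sq (frob_nonneg _)]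
  calc traceNorm A = ∑ i, Real.sqrt (lam i) := htr
    _ = ∑ i ∈ S, Real.sqrt (lam i) := by
        refine (Finset.sum_subset (Finset.filter_subset _ _) fun i _ hi => ?_).symm
        have : lam i = 0 := by simpa [hSdef] using hi
        rw [this, Real.sqrt_zero]
    _ ≤ ∑ i ∈ S, ∑ k, Real.sqrt (g k i) * Real.sqrt (h k i) := Finset.sum_le_sum hsqrt_le
    _ = ∑ k, ∑ i ∈ S, Real.sqrt (g k i) * Real.sqrt (h k i) := Finset.sum_comm
    _ ≤ ∑ k, frob (X k) * frob (Y k) := Finset.sum_le_sum fun k _ => hCSsum k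

attribute [local instance] Matrix.frobeniusSeminormedAddCommGroup

lemma frob_eq_norm {d : ℕ} (A : Matrix (Fin d) (Fin d) ℝ) : frob A = ‖A‖ := by
  rw [Matrix.frobenius_norm_def, frob, Real.sqrt_eq_rpow]
  congr 1
  refine Finset.sum_congr rfl fun i _ => Finset.sum_congr rfl fun j _ => ?_
  rw [Real.rpow_two, Real.norm_eq_abs, sq_abs]

lemma frob_mul_le {d : ℕ} (A B : Matrix (Fin d) (Fin d) ℝ) :
    frob (A * B) ≤ frob A * frob B := by
  simp only [frob_eq_norm]
  exact Matrix.frobenius_norm_mul A B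

lemma frob_sub_le {d : ℕ} (A B : Matrix (Fin d) (Fin d) ℝ) :
    frob (A - B) ≤ frob A + frob B := by
  simp only [frob_eq_norm]
  exact norm_sub_le A B

lemma frob_neg {d : ℕ} (A : Matrix (Fin d) (Fin d) ℝ) : frob (-A) = frob A := by
  simp only [frob_eq_norm]; exact norm_neg A


/-- If `Σ, Σ̂` are PSD with `‖Σ^{1/2} − I‖_F ≤ δ`, `‖Σ̂^{1/2} − I‖_F ≤ δ`
for `0 < δ ≤ 1/2`, and `‖M‖_F = 1`, then
`‖Σ^{1/2}MΣ^{1/2} − Σ̂^{1/2}MΣ̂^{1/2}‖_{S¹} ≤ 5δ`. -/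
theorem schatten_one_conjugation_bound {d : ℕ} (δ : ℝ) (hδ0 : 0 < δ) (hδ : δ ≤ 1 / 2)
    (S Sh M : Matrix (Fin d) (Fin d) ℝ) (hS : S.PosSemidef) (hSh : Sh.PosSemidef)
    (h1 : frob (hS.sqrt - 1) ≤ δ) (h2 : frob (hSh.sqrt - 1) ≤ δ) (hM : frob M = 1) :
    traceNorm (hS.sqrt * M * hS.sqrt - hSh.sqrt * M * hSh.sqrt) ≤ 5 * δ := by
  set A := hS.sqrt with hA
  set B := hSh.sqrt with hB
  set E := A - 1 with hE
  set F := B - 1 with hF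
  have hdecomp : A * M * A - B * M * B
      = ∑ k : Fin 4, (![E - F, M, E, -F] k) * (![M, E - F, M * E, M * F] k) := by
    rw [Fin.sum_univ_four]
    simp only [Matrix.cons_val_zero, Matrix.cons_val_one, Matrix.head_cons,
      Matrix.cons_val_two, Matrix.tail_cons, Matrix.cons_val_three]
    rw [hE, hF]
    noncomm_ring
  rw [hdecomp]
  refine le_trans (traceNorm_sum_mul_le _ _) ?_
  rw [Fin.sum_univ_four]
  simp only [Matrix.cons_val_zero, Matrix.cons_val_one, Matrix.head_cons,
    Matrix.cons_val_two, Matrix.tail_cons, Matrix.cons_val_three]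
  have hEF : frob (E - F) ≤ 2 * δ := le_trans (frob_sub_le E F) (by linarith)
  have hME : frob (M * E) ≤ δ := by
    have := frob_mul_le M E
    rw [hM, one_mul] at this
    linarith
  have hMF : frob (M * F) ≤ δ := by
    have := frob_mul_le M F
    rw [hM, one_mul] at this
    linarith
  have hnF : frob (-F) = frob F := frob_neg F
  have h0E : 0 ≤ frob E := frob_nonneg E
  have h0F : 0 ≤ frob F := frob_nonneg F
  have h0EF : 0 ≤ frob (E - F) := frob_nonneg _
  have h0ME : 0 ≤ frob (M * E) := frob_nonneg _
  have h0MF : 0 ≤ frob (M * F) := frob_nonneg _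
  rw [hM, hnF]
  nlinarith [mul_le_mul hEF (le_refl (1:ℝ)) (by norm_num) (by linarith),
    mul_le_mul h1 hME h0ME (by linarith), mul_le_mul h2 hMF h0MF (by linarith)]
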